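/- arXiv:2412.01688 — 6 statements merged into one kernel-verified Lean document; each statement's English description precedes it below -/
import Mathlib

section
/- Let k ≥ 1 be a natural number and let P be a finite set of at most k points of the circle AddCircle (1:ℝ) of circumference 1, equipped with its Haar (Lebesgue) measure of total mass 1. Then the measure of the set of points t ∈ AddCircle 1 such that the arc {t + s : s ∈ [0, 1/(2k)]} contains no point of P is at least 1/2. -/
/-!
If the arc `[t, t + L]` meets a trap `p`, then `t` lies within `L / 2` of `p - L / 2`, so the
starting points whose arc meets one of the traps are covered by `#P ≤ k` closed balls of
measure at most `L = 1 / (2k)` each. These have total measure at most `1 / 2`, and the circle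
has measure `1`.
-/

open MeasureTheory

namespace AddCircle

open Metric Set

variable {T : ℝ}

theorem mem_closedBall_of_add_coe_eq {L s : ℝ} {t p : AddCircle T} (hs : s ∈ Icc 0 L)
    (h : t + s = p) : t ∈ closedBall (p - ↑(L / 2)) (L / 2) := by
  have hdiff : t - (p - ↑(L / 2)) = ((L / 2 - s : ℝ) : AddCircle T) := by
    rw [← h, QuotientAddGroup.mk_sub]
    abel
  rw [mem_closedBall, dist_eq_norm, hdiff]
  calc ‖((L / 2 - s : ℝ) : AddCircle T)‖ ≤ |L / 2 - s| := QuotientAddGroup.norm_mk_le_norm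
    _ ≤ L / 2 := abs_le.2 ⟨by linarith [hs.2], by linarith [hs.1]⟩

theorem volume_arc_hitting_le [Fact (0 < T)] (P : Finset (AddCircle T)) (L : ℝ) :
    volume {t : AddCircle T | ∃ s ∈ Icc 0 L, t + ↑s ∈ P} ≤ P.card * ENNReal.ofReal L := by
  have hcover : {t : AddCircle T | ∃ s ∈ Icc 0 L, t + ↑s ∈ P} ⊆
      ⋃ p ∈ P, closedBall (p - ↑(L / 2)) (L / 2) := by
    rintro t ⟨s, hs, hsP⟩
    exact mem_iUnion₂.2 ⟨_, hsP, mem_closedBall_of_add_coe_eq hs rfl⟩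
  have hball (p : AddCircle T) : volume (closedBall p (L / 2)) ≤ ENNReal.ofReal L := by
    rw [volume_closedBall]
    exact ENNReal.ofReal_le_ofReal ((min_le_right _ _).trans_eq (by ring))
  calc _ ≤ ∑ p ∈ P, volume (closedBall (p - ↑(L / 2)) (L / 2)) :=
        (measure_mono hcover).trans (measure_biUnion_finset_le P _)
    _ ≤ P.card * ENNReal.ofReal L := by
      simpa using Finset.sum_le_card_nsmul P _ _ fun p _ => hball _

end AddCircle

theorem natCast_mul_ofReal_one_div_two_mul_le (k : ℕ) :
    (k : ENNReal) * ENNReal.ofReal (1 / (2 * (k : ℝ))) ≤ 1 / 2 := by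
  rcases k.eq_zero_or_pos with rfl | hk
  · simp
  rw [← ENNReal.ofReal_natCast, ← ENNReal.ofReal_mul (Nat.cast_nonneg k)]
  have : (k : ℝ) * (1 / (2 * k)) = 2⁻¹ := by field_simp
  rw [this, ENNReal.ofReal_inv_of_pos two_pos, one_div]
  simp

theorem circle_attacker_bound_general (k : ℕ)
    (P : Finset (AddCircle (1 : ℝ))) (hP : P.card ≤ k) :
    (1 / 2 : ENNReal) ≤
      volume {t : AddCircle (1 : ℝ) |
        ∀ s : ℝ, s ∈ Set.Icc (0 : ℝ) (1 / (2 * (k : ℝ))) →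
          t + (s : AddCircle (1 : ℝ)) ∉ P} := by
  set L := 1 / (2 * (k : ℝ))
  set hit := {t : AddCircle (1 : ℝ) | ∃ s ∈ Set.Icc 0 L, t + ↑s ∈ P}
  have hcompl : {t : AddCircle (1 : ℝ) | ∀ s ∈ Set.Icc 0 L, t + (s : AddCircle (1 : ℝ)) ∉ P}
      = hitᶜ := by
    ext t; simp [hit]
  have hhit : volume hit ≤ 1 / 2 :=
    calc volume hit ≤ P.card * ENNReal.ofReal L := AddCircle.volume_arc_hitting_le P L
      _ ≤ k * ENNReal.ofReal L := by gcongr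
      _ ≤ 1 / 2 := natCast_mul_ofReal_one_div_two_mul_le k
  have htotal : 1 ≤ volume hit + volume hitᶜ := by
    simpa [AddCircle.measure_univ] using measure_univ_le_add_compl (μ := volume) hit
  rw [hcompl]
  calc (1 / 2 : ENNReal) = 1 - 1 / 2 := (ENNReal.sub_half ENNReal.one_ne_top).symm
    _ ≤ 1 - volume hit := by gcongr
    _ ≤ volume hitᶜ := tsub_le_iff_left.2 htotal

/-- Attacker-side bound in Theorem 2: for any set `P` of at most `k` booby traps on the
circle of circumference 1, the measure of starting points `t` for which the arc
`{t + s : s ∈ [0, 1/(2k)]}` avoids `P` is at least `1/2`. -/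
theorem circle_attacker_bound (k : ℕ) (hk : 1 ≤ k)
    (P : Finset (AddCircle (1 : ℝ))) (hP : P.card ≤ k) :
    (1 / 2 : ENNReal) ≤
      volume {t : AddCircle (1 : ℝ) |
        ∀ s : ℝ, s ∈ Set.Icc (0 : ℝ) (1 / (2 * (k : ℝ))) →
          t + (s : AddCircle (1 : ℝ)) ∉ P} :=
  circle_attacker_bound_general k P hP
end

section
/- Let n ≥ 2 and let a_1 ≥ a_2 ≥ ⋯ ≥ a_n > 0 be real numbers. For a nonempty subset S ⊆ {1,…,n}, define W(S) = (n−|S|)/(∑_{j∉S} 1/a_j + 1/∑_{j∈S} a_j). If R ⊆ {1,…,n} and j, k ∉ R are two distinct indices with j < k (so a_j ≥ a_k), then W(R ∪ {j}) ≤ W(R ∪ {k}). -/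
/-- The attacker's partition-strategy payoff `W(S) = (n-|S|)/(∑_{j∉S} 1/a_j + 1/∑_{j∈S} a_j)`
for a consolidated set `S` of components with lengths `a`. -/
noncomputable def partitionPayoff (n : ℕ) (a : Fin n → ℝ) (S : Finset (Fin n)) : ℝ :=
  ((n : ℝ) - (S.card : ℝ)) / (∑ j ∈ Sᶜ, (a j)⁻¹ + (∑ j ∈ S, a j)⁻¹)

lemma exchange_key (A B T : ℝ) (hB : 0 < B) (hAB : B ≤ A) (hT : 0 ≤ T) :
    A⁻¹ + (B + T)⁻¹ ≤ B⁻¹ + (A + T)⁻¹ := by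
  have hA : 0 < A := hB.trans_le hAB
  have h1 : 0 < B + T := by linarith
  have h2 : 0 < A + T := by linarith
  rw [← sub_nonneg]
  have e : B⁻¹ + (A + T)⁻¹ - (A⁻¹ + (B + T)⁻¹)
      = (A - B) * ((A + T) * (B + T) - A * B) / (A * B * (A + T) * (B + T)) := by
    field_simp
    ring
  rw [e]
  apply div_nonneg
  · apply mul_nonneg (by linarith)
    nlinarith
  · positivity

/-- Exchange inequality in the proof of Theorem 10: replacing an element `j` of the
consolidated set by an element `k > j` (so `a j ≥ a k`) weakly improves `W`. -/
theorem partitionPayoff_exchange (n : ℕ) (hn : 2 ≤ n) (a : Fin n → ℝ)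
    (ha : Antitone a) (hpos : ∀ i, 0 < a i)
    (R : Finset (Fin n)) (j k : Fin n) (hjR : j ∉ R) (hkR : k ∉ R) (hjk : j < k) :
    partitionPayoff n a (insert j R) ≤ partitionPayoff n a (insert k R) := by
  have hA : 0 < a j := hpos j
  have hB : 0 < a k := hpos k
  have hAB : a k ≤ a j := ha hjk.le
  have hT : (0:ℝ) ≤ ∑ i ∈ R, a i := Finset.sum_nonneg fun i _ => (hpos i).le
  have hc : ∀ m : Fin n, m ∉ R →
      ∑ i ∈ (insert m R)ᶜ, (a i)⁻¹
        = (∑ i, (a i)⁻¹) - (a m)⁻¹ - ∑ i ∈ R, (a i)⁻¹ := by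
    intro m hm
    have h := Finset.sum_add_sum_compl (insert m R) (fun i => (a i)⁻¹)
    rw [Finset.sum_insert hm] at h
    linarith
  have hcard : (insert j R).card = (insert k R).card := by
    rw [Finset.card_insert_of_notMem hjR, Finset.card_insert_of_notMem hkR]
  have hNnonneg : (0:ℝ) ≤ (n : ℝ) - ((insert j R).card : ℝ) := by
    have := Finset.card_le_univ (insert j R)
    have hcn : (insert j R).card ≤ n := by simpa using this
    have : ((insert j R).card : ℝ) ≤ (n : ℝ) := by exact_mod_cast hcn
    linarith
  have hsum1 : ∑ i ∈ insert j R, a i = a j + ∑ i ∈ R, a i := Finset.sum_insert hjR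
  have hsum2 : ∑ i ∈ insert k R, a i = a k + ∑ i ∈ R, a i := Finset.sum_insert hkR
  have hDk : 0 < ∑ i ∈ (insert k R)ᶜ, (a i)⁻¹ + (∑ i ∈ insert k R, a i)⁻¹ := by
    have h1 : (0:ℝ) ≤ ∑ i ∈ (insert k R)ᶜ, (a i)⁻¹ :=
      Finset.sum_nonneg fun i _ => (inv_pos.mpr (hpos i)).le
    have h2 : (0:ℝ) < (∑ i ∈ insert k R, a i)⁻¹ := by
      rw [hsum2]; positivity
    linarith
  have hle : ∑ i ∈ (insert k R)ᶜ, (a i)⁻¹ + (∑ i ∈ insert k R, a i)⁻¹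
      ≤ ∑ i ∈ (insert j R)ᶜ, (a i)⁻¹ + (∑ i ∈ insert j R, a i)⁻¹ := by
    rw [hc j hjR, hc k hkR, hsum1, hsum2]
    have := exchange_key (a j) (a k) (∑ i ∈ R, a i) hB hAB hT
    linarith
  unfold partitionPayoff
  rw [hcard] at hNnonneg ⊢
  exact div_le_div_of_nonneg_left hNnonneg hDk hle
end

section
/- Let n ≥ 2 and let a_1 ≥ a_2 ≥ ⋯ ≥ a_n > 0 be real numbers. For a nonempty subset S ⊆ {1,…,n}, define W(S) = (n−|S|)/(∑_{j∉S} 1/a_j + 1/∑_{j∈S} a_j). Then for every nonempty S ⊆ {1,…,n} with |S| = m, one has W(S) ≤ W({n−m+1, n−m+2, …, n}). Consequently, max over nonempty S ⊆ {1,…,n} of W(S) equals max over t ∈ {2,…,n} of U(t), where U(t) = W({t, t+1, …, n}) = (t−1)/(∑_{j=1}^{t−1} 1/a_j + 1/∑_{j=t}^{n} a_j). -/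
/-- `U(t) = (t-1)/(∑_{j=1}^{t-1} 1/a_j + 1/∑_{j=t}^{n} a_j)` (1-based indices), i.e.
the payoff `W` of the suffix set `{t, t+1, …, n}`. -/
noncomputable def suffixPayoff (n : ℕ) (a : Fin n → ℝ) (t : ℕ) : ℝ :=
  ((t : ℝ) - 1) /
    (∑ j ∈ Finset.univ.filter (fun j : Fin n => (j : ℕ) + 1 < t), (a j)⁻¹
      + (∑ j ∈ Finset.univ.filter (fun j : Fin n => t ≤ (j : ℕ) + 1), a j)⁻¹)

/-- cardinality of a "suffix" filter in `Fin n`. -/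
lemma aux_card_filter (n k : ℕ) (hk : k < n) :
    (Finset.univ.filter (fun j : Fin n => k ≤ (j : ℕ))).card = n - k := by
  have h : (Finset.univ.filter (fun j : Fin n => k ≤ (j : ℕ)))
      = Finset.Ici (⟨k, hk⟩ : Fin n) := by
    ext j
    simp [Fin.le_def]
  rw [h, Fin.card_Ici]

/-- Core inequality: if `T` has the same cardinality as `S` and the values on `T \ S`
are dominated by those on `S \ T`, then the denominator of `W(T)` is at most that of
`W(S)`. -/
lemma aux_denom_le (n : ℕ) (a : Fin n → ℝ) (hpos : ∀ i, 0 < a i)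
    (S T : Finset (Fin n)) (hS : S.Nonempty) (hcard : T.card = S.card)
    (hdom : ∀ i ∈ S \ T, ∀ k ∈ T \ S, a k ≤ a i) :
    ∑ j ∈ Tᶜ, (a j)⁻¹ + (∑ j ∈ T, a j)⁻¹ ≤ ∑ j ∈ Sᶜ, (a j)⁻¹ + (∑ j ∈ S, a j)⁻¹ := by
  have hT : T.Nonempty := by
    rw [← Finset.card_pos, hcard, Finset.card_pos]; exact hS
  set P := ∑ j ∈ S, a j with hPdef
  set Q := ∑ j ∈ T, a j with hQdef
  have hP : 0 < P := Finset.sum_pos (fun i _ => hpos i) hS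
  have hQ : 0 < Q := Finset.sum_pos (fun i _ => hpos i) hT
  -- the bijection between the symmetric difference pieces
  have hcard' : Fintype.card ↥(S \ T : Finset (Fin n)) = Fintype.card ↥(T \ S : Finset (Fin n)) := by
    simp only [Fintype.card_coe]
    exact Finset.card_sdiff_comm hcard.symm
  obtain ⟨e⟩ : Nonempty (↥(S \ T : Finset (Fin n)) ≃ ↥(T \ S : Finset (Fin n))) :=
    ⟨Fintype.equivOfCardEq hcard'⟩
  -- rewrite sums over complements
  have hcomplS : ∑ j ∈ Sᶜ, (a j)⁻¹ = ∑ j, (a j)⁻¹ - ∑ j ∈ S, (a j)⁻¹ := by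
    rw [eq_sub_iff_add_eq, Finset.sum_compl_add_sum]
  have hcomplT : ∑ j ∈ Tᶜ, (a j)⁻¹ = ∑ j, (a j)⁻¹ - ∑ j ∈ T, (a j)⁻¹ := by
    rw [eq_sub_iff_add_eq, Finset.sum_compl_add_sum]
  rw [hcomplS, hcomplT]
  -- reduce to: ∑_S inv - ∑_T inv ≤ P⁻¹ - Q⁻¹
  have hsplit : ∀ f : Fin n → ℝ,
      ∑ j ∈ S, f j - ∑ j ∈ T, f j = ∑ j ∈ S \ T, f j - ∑ j ∈ T \ S, f j := by
    intro f
    have h1 : ∑ j ∈ S ∩ T, f j + ∑ j ∈ S \ T, f j = ∑ j ∈ S, f j :=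
      Finset.sum_inter_add_sum_sdiff S T f
    have h2 : ∑ j ∈ T ∩ S, f j + ∑ j ∈ T \ S, f j = ∑ j ∈ T, f j :=
      Finset.sum_inter_add_sum_sdiff T S f
    rw [Finset.inter_comm] at h2
    linarith
  have htrans : ∀ f : Fin n → ℝ,
      ∑ j ∈ T \ S, f j = ∑ i : ↥(S \ T : Finset (Fin n)), f (e i : Fin n) := by
    intro f
    rw [← Finset.sum_coe_sort (T \ S) f]
    exact (Equiv.sum_comp e (fun i => f (i : Fin n))).symm
  have key1 : ∑ j ∈ S, (a j)⁻¹ - ∑ j ∈ T, (a j)⁻¹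
      = ∑ i : ↥(S \ T : Finset (Fin n)), ((a i)⁻¹ - (a (e i : Fin n))⁻¹) := by
    rw [hsplit (fun j => (a j)⁻¹), htrans (fun j => (a j)⁻¹),
      ← Finset.sum_coe_sort (S \ T) (fun j => (a j)⁻¹), Finset.sum_sub_distrib]
  have key2 : Q - P = ∑ i : ↥(S \ T : Finset (Fin n)), (a (e i : Fin n) - a i) := by
    have := hsplit a
    rw [htrans a, ← Finset.sum_coe_sort (S \ T) a] at this
    rw [Finset.sum_sub_distrib]
    rw [hPdef, hQdef]
    linarith
  have key3 : P⁻¹ - Q⁻¹ = (Q - P) / (P * Q) := inv_sub_inv hP.ne' hQ.ne'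
  have main : ∑ j ∈ S, (a j)⁻¹ - ∑ j ∈ T, (a j)⁻¹ ≤ P⁻¹ - Q⁻¹ := by
    rw [key1, key3, key2, Finset.sum_div]
    apply Finset.sum_le_sum
    intro i _
    set x := a (i : Fin n) with hxdef
    set y := a ((e i : ↥(T \ S : Finset (Fin n))) : Fin n) with hydef
    have hx : 0 < x := hpos _
    have hy : 0 < y := hpos _
    have hyx : y ≤ x := hdom _ i.2 _ (e i).2
    have hxP : x ≤ P := by
      apply Finset.single_le_sum (fun j _ => (hpos j).le)
      exact (Finset.sdiff_subset) i.2
    have hyQ : y ≤ Q := by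
      apply Finset.single_le_sum (fun j _ => (hpos j).le)
      exact (Finset.sdiff_subset) (e i).2
    rw [inv_sub_inv hx.ne' hy.ne']
    rw [div_le_div_iff₀ (by positivity) (by positivity)]
    nlinarith [mul_nonneg (sub_nonneg.2 hyx)
      (sub_nonneg.2 (mul_le_mul hxP hyQ hy.le hP.le))]
  linarith

/-- The suffix payoff is the partition payoff of the suffix set. -/
lemma aux_suffix_eq (n : ℕ) (a : Fin n → ℝ) (t : ℕ) (h2 : 2 ≤ t) (htn : t ≤ n) :
    suffixPayoff n a t
      = partitionPayoff n a (Finset.univ.filter (fun j : Fin n => t ≤ (j : ℕ) + 1)) := by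
  have hn1 : 1 ≤ n := le_trans (by omega) htn
  have hfilter : (Finset.univ.filter (fun j : Fin n => t ≤ (j : ℕ) + 1))
      = Finset.univ.filter (fun j : Fin n => t - 1 ≤ (j : ℕ)) := by
    ext j
    simp only [Finset.mem_filter, Finset.mem_univ, true_and]
    omega
  have hcard : (Finset.univ.filter (fun j : Fin n => t ≤ (j : ℕ) + 1)).card = n - (t - 1) := by
    rw [hfilter]
    exact aux_card_filter n (t - 1) (by omega)
  unfold suffixPayoff partitionPayoff
  have hnum : (n : ℝ) - ((Finset.univ.filter (fun j : Fin n => t ≤ (j : ℕ) + 1)).card : ℝ)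
      = (t : ℝ) - 1 := by
    rw [hcard]
    have h1 : ((n - (t - 1) : ℕ) : ℝ) = (n : ℝ) - ((t - 1 : ℕ) : ℝ) := by
      rw [Nat.cast_sub (by omega)]
    have h2' : ((t - 1 : ℕ) : ℝ) = (t : ℝ) - 1 := by
      rw [Nat.cast_sub (by omega)]; simp
    rw [h1, h2']
    ring
  rw [hnum, Finset.compl_filter]
  have hfilter2 : (Finset.univ.filter (fun j : Fin n => ¬ t ≤ (j : ℕ) + 1))
      = Finset.univ.filter (fun j : Fin n => (j : ℕ) + 1 < t) := by
    ext j
    simp only [Finset.mem_filter, Finset.mem_univ, true_and]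
    omega
  rw [hfilter2]

/-- Theorem 10: for components of lengths `a_1 ≥ a_2 ≥ ⋯ ≥ a_n > 0`, every nonempty
consolidated set `S` with `|S| = m` is weakly dominated by the suffix set
`{n-m+1, …, n}`, and hence the maximum of `W` over nonempty sets equals the maximum of
`U(t)` over `t ∈ {2, …, n}`. -/
theorem partitionPayoff_suffix_optimal (n : ℕ) (hn : 2 ≤ n) (a : Fin n → ℝ)
    (ha : Antitone a) (hpos : ∀ i, 0 < a i) :
    (∀ S : Finset (Fin n), S.Nonempty →
      partitionPayoff n a S ≤
        partitionPayoff n a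
          (Finset.univ.filter (fun j : Fin n => n - S.card + 1 ≤ (j : ℕ) + 1))) ∧
    sSup {x : ℝ | ∃ S : Finset (Fin n), S.Nonempty ∧ partitionPayoff n a S = x}
      = sSup {x : ℝ | ∃ t : ℕ, 2 ≤ t ∧ t ≤ n ∧ suffixPayoff n a t = x} := by
  have hnpos : 0 < n := by omega
  -- Part 1
  have part1 : ∀ S : Finset (Fin n), S.Nonempty →
      partitionPayoff n a S ≤
        partitionPayoff n a
          (Finset.univ.filter (fun j : Fin n => n - S.card + 1 ≤ (j : ℕ) + 1)) := by
    intro S hS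
    set m := S.card with hmdef
    have hm1 : 1 ≤ m := Finset.card_pos.2 hS
    have hmn : m ≤ n := by
      have := Finset.card_le_card (Finset.subset_univ S)
      simpa using this
    set T := Finset.univ.filter (fun j : Fin n => n - m + 1 ≤ (j : ℕ) + 1) with hTdef
    have hTfilter : T = Finset.univ.filter (fun j : Fin n => n - m ≤ (j : ℕ)) := by
      rw [hTdef]
      ext j
      simp only [Finset.mem_filter, Finset.mem_univ, true_and]
      omega
    have hTcard : T.card = m := by
      rw [hTfilter, aux_card_filter n (n - m) (by omega)]
      omega
    have hdom : ∀ i ∈ S \ T, ∀ k ∈ T \ S, a k ≤ a i := by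
      intro i hi k hk
      have hiT : i ∉ T := (Finset.mem_sdiff.1 hi).2
      have hkT : k ∈ T := (Finset.mem_sdiff.1 hk).1
      rw [hTfilter, Finset.mem_filter] at hiT hkT
      have hi' : (i : ℕ) < n - m := by
        by_contra h
        exact hiT ⟨Finset.mem_univ _, by omega⟩
      have hk' : n - m ≤ (k : ℕ) := hkT.2
      exact ha (by rw [Fin.le_def]; omega)
    have hdenom := aux_denom_le n a hpos S T hS (by rw [hTcard]) hdom
    unfold partitionPayoff
    rw [hTcard, ← hmdef]
    have hT : T.Nonempty := by rw [← Finset.card_pos, hTcard]; omega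
    have hDT : 0 < ∑ j ∈ Tᶜ, (a j)⁻¹ + (∑ j ∈ T, a j)⁻¹ := by
      apply add_pos_of_nonneg_of_pos
      · exact Finset.sum_nonneg fun j _ => (inv_pos.2 (hpos j)).le
      · exact inv_pos.2 (Finset.sum_pos (fun i _ => hpos i) hT)
    have hNum : (0 : ℝ) ≤ (n : ℝ) - (m : ℝ) := by
      have : (m : ℝ) ≤ (n : ℝ) := Nat.cast_le.2 hmn
      linarith
    exact div_le_div_of_nonneg_left hNum hDT hdenom
  refine ⟨part1, ?_⟩
  -- Part 2
  set A := {x : ℝ | ∃ S : Finset (Fin n), S.Nonempty ∧ partitionPayoff n a S = x} with hAdef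
  set B := {x : ℝ | ∃ t : ℕ, 2 ≤ t ∧ t ≤ n ∧ suffixPayoff n a t = x} with hBdef
  have hne : Nonempty (Fin n) := ⟨⟨0, by omega⟩⟩
  have hANe : A.Nonempty := ⟨partitionPayoff n a Finset.univ,
    Finset.univ, Finset.univ_nonempty, rfl⟩
  have hBNe : B.Nonempty := ⟨suffixPayoff n a 2, 2, le_refl 2, hn, rfl⟩
  have hABdd : BddAbove A := by
    apply BddAbove.mono (t := Set.range (partitionPayoff n a))
    · rintro x ⟨S, _, rfl⟩; exact ⟨S, rfl⟩
    · exact (Set.finite_range _).bddAbove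
  have hBBdd : BddAbove B := by
    apply BddAbove.mono (t := suffixPayoff n a '' Set.Icc 2 n)
    · rintro x ⟨t, h1, h2, rfl⟩; exact ⟨t, ⟨h1, h2⟩, rfl⟩
    · exact ((Set.finite_Icc 2 n).image _).bddAbove
  -- B ⊆ A
  have hBA : B ⊆ A := by
    rintro x ⟨t, h2, htn, rfl⟩
    refine ⟨Finset.univ.filter (fun j : Fin n => t ≤ (j : ℕ) + 1), ?_, ?_⟩
    · refine ⟨⟨n - 1, by omega⟩, ?_⟩
      simp only [Finset.mem_filter, Finset.mem_univ, true_and]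
      omega
    · exact (aux_suffix_eq n a t h2 htn).symm
  apply le_antisymm
  · -- sSup A ≤ sSup B
    apply csSup_le hANe
    rintro x ⟨S, hS, rfl⟩
    by_cases hScard : S.card = n
    · -- payoff is zero
      have hzero : partitionPayoff n a S = 0 := by
        unfold partitionPayoff
        rw [hScard, sub_self, zero_div]
      rw [hzero]
      have hU2 : 0 ≤ suffixPayoff n a 2 := by
        unfold suffixPayoff
        apply div_nonneg (by norm_num)
        apply add_nonneg
        · exact Finset.sum_nonneg fun j _ => (inv_pos.2 (hpos j)).le
        · apply inv_nonneg.2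
          exact Finset.sum_nonneg fun j _ => (hpos j).le
      calc (0 : ℝ) ≤ suffixPayoff n a 2 := hU2
        _ ≤ sSup B := le_csSup hBBdd ⟨2, le_refl 2, hn, rfl⟩
    · have hm1 : 1 ≤ S.card := Finset.card_pos.2 hS
      have hmn : S.card ≤ n := by
        have := Finset.card_le_card (Finset.subset_univ S)
        simpa using this
      set t := n - S.card + 1 with htdef
      have h2t : 2 ≤ t := by omega
      have htn : t ≤ n := by omega
      calc partitionPayoff n a S
          ≤ partitionPayoff n a
            (Finset.univ.filter (fun j : Fin n => n - S.card + 1 ≤ (j : ℕ) + 1)) := part1 S hS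
        _ = suffixPayoff n a t := (aux_suffix_eq n a t h2t htn).symm
        _ ≤ sSup B := le_csSup hBBdd ⟨t, h2t, htn, rfl⟩
  · exact csSup_le_csSup hABdd hBNe hBA
end

section
/- Let n ≥ 2 and let a_1 ≥ a_2 ≥ ⋯ ≥ a_n > 0 be real numbers. For t ∈ {2,…,n}, define U(t) = (t−1)/(∑_{j=1}^{t−1} 1/a_j + 1/∑_{j=t}^{n} a_j). If t is an integer with t > (n+1)/2 and 2 ≤ t ≤ n−1, then U(t) > U(t+1). Consequently, max over t ∈ {2,…,n} of U(t) is attained for some t ≤ ⌈n/2⌉ + 1. -/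
open Finset

theorem add_one_div_lt_div_of_split {k x A S : ℝ} (hx : 0 < x) (hS : 0 < S) (hA₀ : 0 ≤ A)
    (hA : A ≤ k / x) (hSk : S < k * x) :
    (k + 1) / (x⁻¹ + A + S⁻¹) < k / (A + (x + S)⁻¹) := by
  have hxS : 0 < x + S := by positivity
  have hblock : (k + 1) / (x + S) < k / S := by
    rw [div_lt_div_iff₀ hxS hS]
    linarith
  rw [div_lt_div_iff₀ (by positivity) (add_pos_of_nonneg_of_pos hA₀ (inv_pos.2 hxS))]
  simp only [div_eq_mul_inv] at hA hblock
  linear_combination hA + hblock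

theorem Antitone.sum_Iio_inv_le {ι 𝕜 : Type*} [Preorder ι] [LocallyFiniteOrderBot ι] [Field 𝕜]
    [LinearOrder 𝕜] [IsStrictOrderedRing 𝕜] {a : ι → 𝕜} (ha : Antitone a) {i : ι}
    (hi : 0 < a i) : ∑ j ∈ Iio i, (a j)⁻¹ ≤ #(Iio i) • (a i)⁻¹ :=
  sum_le_card_nsmul _ _ _ fun _ hj ↦ inv_anti₀ hi (ha (mem_Iio.1 hj).le)

theorem Antitone.sum_Ioi_le {ι M : Type*} [Preorder ι] [LocallyFiniteOrderTop ι]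
    [AddCommMonoid M] [PartialOrder M] [IsOrderedAddMonoid M] {a : ι → M} (ha : Antitone a)
    (i : ι) : ∑ j ∈ Ioi i, a j ≤ #(Ioi i) • a i :=
  sum_le_card_nsmul _ _ _ fun _ hj ↦ ha (mem_Ioi.1 hj).le

section suffixPayoff

variable {n : ℕ} (a : Fin n → ℝ)

theorem suffixPayoff_val_add_one (i : Fin n) :
    suffixPayoff n a (i + 1) =
      i / (∑ j ∈ Iio i, (a j)⁻¹ + (a i + ∑ j ∈ Ioi i, a j)⁻¹) := by
  have hIio : univ.filter (fun j : Fin n ↦ (j : ℕ) + 1 < i + 1) = Iio i := by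
    ext j; simp only [mem_filter, mem_univ, true_and, mem_Iio, Fin.lt_def]; omega
  have hIci : univ.filter (fun j : Fin n ↦ (i : ℕ) + 1 ≤ j + 1) = Ici i := by
    ext j; simp only [mem_filter, mem_univ, true_and, mem_Ici, Fin.le_def]; omega
  rw [suffixPayoff, hIio, hIci, ← Ioi_insert, sum_insert notMem_Ioi_self]
  push_cast
  ring

theorem suffixPayoff_val_add_two (i : Fin n) :
    suffixPayoff n a (i + 2) =
      (i + 1) / ((a i)⁻¹ + ∑ j ∈ Iio i, (a j)⁻¹ + (∑ j ∈ Ioi i, a j)⁻¹) := by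
  have hIic : univ.filter (fun j : Fin n ↦ (j : ℕ) + 1 < i + 2) = Iic i := by
    ext j; simp only [mem_filter, mem_univ, true_and, mem_Iic, Fin.le_def]; omega
  have hIoi : univ.filter (fun j : Fin n ↦ (i : ℕ) + 2 ≤ j + 1) = Ioi i := by
    ext j; simp only [mem_filter, mem_univ, true_and, mem_Ioi, Fin.lt_def]; omega
  rw [suffixPayoff, hIic, hIoi, ← Iio_insert, sum_insert notMem_Iio_self]
  push_cast
  ring

variable {a}

theorem suffixPayoff_succ_lt (ha : Antitone a) (hpos : ∀ i, 0 < a i) {t : ℕ} (htn : t < n)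
    (hhalf : n + 1 < 2 * t) : suffixPayoff n a (t + 1) < suffixPayoff n a t := by
  obtain ⟨i, rfl⟩ : ∃ i : Fin n, t = i + 1 := ⟨⟨t - 1, by omega⟩, by simp; omega⟩
  rw [suffixPayoff_val_add_two, suffixPayoff_val_add_one]
  refine add_one_div_lt_div_of_split (hpos i) ?_ (sum_nonneg fun j _ ↦ (inv_pos.2 (hpos j)).le)
    ?_ ?_
  · exact sum_pos (fun j _ ↦ hpos j) ⟨⟨i + 1, htn⟩, by simp [Fin.lt_def]⟩
  · simpa [Fin.card_Iio, div_eq_mul_inv] using ha.sum_Iio_inv_le (hpos i)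
  · refine (ha.sum_Ioi_le i).trans_lt ?_
    rw [Fin.card_Ioi, nsmul_eq_mul]
    gcongr
    · exact hpos i
    · exact_mod_cast (by omega : n - 1 - i < i)

end suffixPayoff

theorem exists_mem_Icc_forall_le_of_antitoneOn {β : Type*} [LinearOrder β] {f : ℕ → β}
    {a m n : ℕ} (ham : a ≤ m) (hmn : m ≤ n) (hf : AntitoneOn f (Set.Icc m n)) :
    ∃ t₀ ∈ Icc a m, ∀ t ∈ Icc a n, f t ≤ f t₀ := by
  obtain ⟨t₀, ht₀, hmax⟩ := exists_max_image (Icc a m) f ⟨a, left_mem_Icc.2 ham⟩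
  refine ⟨t₀, ht₀, fun t ht ↦ ?_⟩
  rw [mem_Icc] at ht
  rcases le_total t m with htm | hmt
  · exact hmax t (mem_Icc.2 ⟨ht.1, htm⟩)
  · exact (hf ⟨le_rfl, hmn⟩ ⟨hmt, ht.2⟩ hmt).trans (hmax m (mem_Icc.2 ⟨ham, le_rfl⟩))

/-- Theorem 11: if `t > (n+1)/2` (and `2 ≤ t ≤ n-1`) then `U(t) > U(t+1)`; consequently
the maximum of `U(t)` over `t ∈ {2, …, n}` is attained at some `t ≤ ⌈n/2⌉ + 1`. -/
theorem suffixPayoff_max_in_first_half (n : ℕ) (hn : 2 ≤ n) (a : Fin n → ℝ)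
    (ha : Antitone a) (hpos : ∀ i, 0 < a i) :
    (∀ t : ℕ, 2 ≤ t → t ≤ n - 1 → ((n : ℝ) + 1) / 2 < (t : ℝ) →
      suffixPayoff n a (t + 1) < suffixPayoff n a t) ∧
    (∃ t₀ : ℕ, 2 ≤ t₀ ∧ t₀ ≤ (n + 1) / 2 + 1 ∧ t₀ ≤ n ∧
      ∀ t : ℕ, 2 ≤ t → t ≤ n → suffixPayoff n a t ≤ suffixPayoff n a t₀) := by
  refine ⟨fun t _ htn hhalf ↦ suffixPayoff_succ_lt ha hpos (by omega) ?_, ?_⟩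
  · have : (n : ℝ) + 1 < 2 * t := by linarith
    exact_mod_cast this
  have hdec : AntitoneOn (suffixPayoff n a) (Set.Icc ((n + 1) / 2 + 1) n) :=
    antitoneOn_of_add_one_le Set.ordConnected_Icc fun t _ ⟨hmt, _⟩ ⟨_, htn⟩ ↦
      (suffixPayoff_succ_lt ha hpos htn (by omega)).le
  obtain ⟨t₀, ht₀, hmax⟩ :=
    exists_mem_Icc_forall_le_of_antitoneOn (a := 2) (by omega) (by omega) hdec
  rw [mem_Icc] at ht₀
  exact ⟨t₀, ht₀.1, ht₀.2, by omega, fun t ht2 htn ↦ hmax t (mem_Icc.2 ⟨ht2, htn⟩)⟩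
end

section
/- Let a be a real number with 0 < a < 1/2 and set p = 4a/(1+4a²). Then: (i) for every real x with 0 ≤ x ≤ a, x(1 − p·x) ≤ a/(1+4a²); and (ii) for every real x with 0 ≤ x ≤ 1, p·x(1−x) ≤ a/(1+4a²). -/
/-- Lemma 8 (defender's centroid strategy bound): with `p = 4a/(1+4a²)` for `0 < a < 1/2`,
(i) `x(1 - px) ≤ a/(1+4a²)` for `0 ≤ x ≤ a`, and
(ii) `p·x(1-x) ≤ a/(1+4a²)` for `0 ≤ x ≤ 1`. -/
theorem centroid_strategy_bound (a : ℝ) (h0 : 0 < a) (h1 : a < 1 / 2)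
    (p : ℝ) (hp : p = 4 * a / (1 + 4 * a ^ 2)) :
    (∀ x : ℝ, 0 ≤ x → x ≤ a → x * (1 - p * x) ≤ a / (1 + 4 * a ^ 2)) ∧
    (∀ x : ℝ, 0 ≤ x → x ≤ 1 → p * x * (1 - x) ≤ a / (1 + 4 * a ^ 2)) := by
  have hd : (0:ℝ) < 1 + 4 * a ^ 2 := by positivity
  subst hp
  constructor
  · intro x hx hxa
    rw [← sub_nonneg]
    have key : a / (1 + 4 * a ^ 2) - x * (1 - 4 * a / (1 + 4 * a ^ 2) * x)
        = (a - x) * (1 - 4 * a * x) / (1 + 4 * a ^ 2) := by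
      field_simp; ring
    rw [key]
    apply div_nonneg _ hd.le
    have : 4 * a * x < 1 := by nlinarith
    nlinarith
  · intro x hx hx1
    rw [← sub_nonneg]
    have key : a / (1 + 4 * a ^ 2) - 4 * a / (1 + 4 * a ^ 2) * x * (1 - x)
        = a * (1 - 2 * x) ^ 2 / (1 + 4 * a ^ 2) := by
      field_simp; ring
    rw [key]
    positivity
end

section
/- Let n ≥ 3 be an odd natural number, let j be an integer with 1 ≤ j ≤ n−1, and let y be a real number with 0 ≤ y ≤ 4/(n(n²−1)). Then (j/n + y) · (4(n−j)/(n²+3) − n(n²−1)y/(n²+3)) ≤ (n²−1)/(n(n²+3)). -/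
/-- Defender-side verification in Theorem 15 (odd symmetric star): for odd `n ≥ 3`,
`1 ≤ j ≤ n-1` and `0 ≤ y ≤ 4/(n(n²-1))`, the attacker's expected payoff
`(j/n + y)·(4(n-j)/(n²+3) - n(n²-1)y/(n²+3))` is at most `(n²-1)/(n(n²+3))`. -/
theorem odd_star_defender_bound (n : ℕ) (hn : 3 ≤ n) (hodd : Odd n)
    (j : ℕ) (hj1 : 1 ≤ j) (hjn : j ≤ n - 1)
    (y : ℝ) (hy0 : 0 ≤ y) (hy1 : y ≤ 4 / ((n : ℝ) * ((n : ℝ) ^ 2 - 1))) :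
    ((j : ℝ) / (n : ℝ) + y) *
        (4 * ((n : ℝ) - (j : ℝ)) / ((n : ℝ) ^ 2 + 3)
          - (n : ℝ) * ((n : ℝ) ^ 2 - 1) * y / ((n : ℝ) ^ 2 + 3))
      ≤ ((n : ℝ) ^ 2 - 1) / ((n : ℝ) * ((n : ℝ) ^ 2 + 3)) := by
  obtain ⟨m, hm⟩ := hodd
  have hn3 : (3 : ℝ) ≤ (n : ℝ) := by exact_mod_cast hn
  have ha1 : (1 : ℝ) ≤ (j : ℝ) := by exact_mod_cast hj1
  have hjn' : j ≤ n - 1 := hjn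
  have han : (j : ℝ) ≤ (n : ℝ) - 1 := by
    have : j + 1 ≤ n := by omega
    have := (Nat.cast_le (α := ℝ)).mpr this
    push_cast at this; linarith
  have hnpos : (0 : ℝ) < n := by linarith
  have hdpos : (0 : ℝ) < (n : ℝ) ^ 2 + 3 := by nlinarith
  -- oddness: (n - 2j)^2 ≥ 1
  have hm' : (n : ℝ) = 2 * (m : ℝ) + 1 := by exact_mod_cast hm
  have hsq : (1 : ℝ) ≤ ((n : ℝ) - 2 * (j : ℝ)) ^ 2 := by
    rcases le_or_gt j m with h | h
    · have : (j : ℝ) ≤ (m : ℝ) := by exact_mod_cast h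
      nlinarith
    · have : (m : ℝ) + 1 ≤ (j : ℝ) := by exact_mod_cast h
      nlinarith
  have key : ((j : ℝ) + (n : ℝ) * y) * (4 * ((n : ℝ) - (j : ℝ)) -
      (n : ℝ) * ((n : ℝ) ^ 2 - 1) * y) ≤ (n : ℝ) ^ 2 - 1 := by
    have hA : (0:ℝ) ≤ ((j:ℝ) - 1) * ((n:ℝ)^2 + 3) :=
      mul_nonneg (by linarith) (by linarith)
    have hB : (0:ℝ) ≤ ((n:ℝ) - 1) * ((n:ℝ) - 3) :=
      mul_nonneg (by linarith) (by linarith)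
    have hlin : 4 * (n : ℝ) * ((n : ℝ) - (j : ℝ)) ≤
        (j : ℝ) * (n : ℝ) * ((n : ℝ) ^ 2 - 1) := by
      nlinarith [mul_nonneg hnpos.le hA, mul_nonneg hnpos.le hB]
    nlinarith [mul_nonneg hy0 (sub_nonneg.mpr hlin),
      mul_nonneg (by nlinarith : (0:ℝ) ≤ (n:ℝ)^2 - 1) (sq_nonneg ((n:ℝ)*y))]
  have hne : (n : ℝ) ≠ 0 := ne_of_gt hnpos
  have hne2 : (n : ℝ) ^ 2 + 3 ≠ 0 := ne_of_gt hdpos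
  have e1 : (j:ℝ)/(n:ℝ) + y = ((j:ℝ) + (n:ℝ)*y)/(n:ℝ) := by field_simp
  have e2 : 4 * ((n : ℝ) - (j : ℝ)) / ((n : ℝ) ^ 2 + 3)
      - (n : ℝ) * ((n : ℝ) ^ 2 - 1) * y / ((n : ℝ) ^ 2 + 3)
      = (4 * ((n : ℝ) - (j : ℝ)) - (n : ℝ) * ((n : ℝ) ^ 2 - 1) * y) / ((n : ℝ) ^ 2 + 3) :=
    div_sub_div_same _ _ _
  rw [e1, e2, div_mul_div_comm]
  gcongr
end
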